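/- Preservation of stochastic monotonicity under independent augmentation (second part): Let X, Y, Z be random elements with partially ordered Polish sample spaces, suppose X is stochastically increasing in Y, and Z is independent of (X, Y). Then (X, Z) is stochastically increasing in the pair (Y, Z): for every bounded nondecreasing h, (y,z) ↦ E[h(X,Z) | Y=y, Z=z] is nondecreasing in (y,z) with the product order. -/

import Mathlib

/-!
Independence of `Z` from `(X, Y)` makes `(y, z) ↦ κ y ⊗ δ_z`, i.e. the kernel `κ ∥ₖ id`, a
conditional law of `(X, Z)` given `(Y, Z)`. Integrating `h` against it gives
`∫ h (x, z) dκ_y(x)`, which increases in `y` by the stochastic monotonicity of `κ` applied to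
`h (·, z)`, and in `z` because `h` does.
-/

open MeasureTheory ProbabilityTheory

namespace ProbabilityTheory.Kernel

variable {α β γ : Type*} [MeasurableSpace α] [MeasurableSpace β] [MeasurableSpace γ]

def IsStochasticallyMonotone [Preorder α] [Preorder β] (κ : Kernel β α) : Prop :=
  ∀ g : α → ℝ, Measurable g → Monotone g → (∃ C, ∀ x, |g x| ≤ C) →
    Monotone (fun y => ∫ x, g x ∂(κ y))

lemma parallelComp_id_apply (κ : Kernel β α) [IsSFiniteKernel κ] (p : β × γ) :
    (κ ∥ₖ Kernel.id) p = (κ p.1).map (·, p.2) := by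
  rw [parallelComp_apply, id_apply, Measure.prod_dirac]

lemma integral_parallelComp_id (κ : Kernel β α) [IsSFiniteKernel κ] {h : α × γ → ℝ}
    (hh : Measurable h) (p : β × γ) :
    ∫ x, h x ∂((κ ∥ₖ (Kernel.id : Kernel γ γ)) p) = ∫ x, h (x, p.2) ∂(κ p.1) := by
  rw [parallelComp_id_apply, integral_map (by fun_prop) hh.aestronglyMeasurable]

lemma IsStochasticallyMonotone.parallelComp_id [Preorder α] [Preorder β] [Preorder γ]
    {κ : Kernel β α} [IsFiniteKernel κ] (hκ : κ.IsStochasticallyMonotone) :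
    (κ ∥ₖ (Kernel.id : Kernel γ γ)).IsStochasticallyMonotone := by
  rintro h hh hmono ⟨C, hC⟩ ⟨y, z⟩ ⟨y', z'⟩ ⟨hy, hz⟩
  have hsection (z : γ) : Measurable fun x => h (x, z) := hh.comp measurable_prodMk_right
  have hint (z : γ) : Integrable (fun x => h (x, z)) (κ y') :=
    .of_bound (hsection z).aestronglyMeasurable C (ae_of_all _ fun x => hC (x, z))
  simp only [integral_parallelComp_id κ hh]
  calc ∫ x, h (x, z) ∂(κ y)
      ≤ ∫ x, h (x, z) ∂(κ y') :=
        hκ _ (hsection z) (fun a b hab => hmono ⟨hab, le_rfl⟩) ⟨C, fun x => hC _⟩ hy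
    _ ≤ ∫ x, h (x, z') ∂(κ y') :=
        integral_mono (hint z) (hint z') fun x => hmono ⟨le_rfl, hz⟩

end ProbabilityTheory.Kernel

namespace MeasureTheory.Measure

variable {α β γ : Type*} [MeasurableSpace α] [MeasurableSpace β] [MeasurableSpace γ]

lemma compProd_parallelComp_id (μ : Measure β) (ν : Measure γ) [SFinite μ] [SFinite ν]
    (κ : Kernel β α) [IsSFiniteKernel κ] :
    (μ.prod ν) ⊗ₘ (κ ∥ₖ Kernel.id) =
      ((μ ⊗ₘ κ).prod ν).map (fun p => ((p.1.1, p.2), (p.1.2, p.2))) := by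
  have hg : Measurable fun p : (β × α) × γ => ((p.1.1, p.2), (p.1.2, p.2)) := by fun_prop
  rw [compProd_eq_comp_prod, compProd_eq_comp_prod, prod_comp_left,
    ← deterministic_comp_eq_map hg, comp_assoc]
  congr 1
  ext1 p
  rw [Kernel.comp_apply, Kernel.prod_apply, Kernel.parallelComp_id_apply, Kernel.id_apply,
    dirac_prod, deterministic_comp_eq_map, Kernel.parallelComp_apply, Kernel.id_apply,
    Kernel.prod_apply, Kernel.id_apply, dirac_prod, prod_dirac, map_map (by fun_prop) (by fun_prop),
    map_map hg (by fun_prop), map_map (by fun_prop) (by fun_prop)]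
  rfl

end MeasureTheory.Measure

namespace ProbabilityTheory

lemma IndepFun.map_prodMk_eq_compProd_parallelComp_id {Ω α β γ : Type*} [MeasurableSpace Ω]
    [MeasurableSpace α] [MeasurableSpace β] [MeasurableSpace γ]
    {μ : Measure Ω} [IsFiniteMeasure μ] {X : Ω → α} {Y : Ω → β} {Z : Ω → γ}
    (hX : Measurable X) (hY : Measurable Y) (hZ : Measurable Z)
    (hindep : IndepFun (fun ω => (X ω, Y ω)) Z μ)
    {κ : Kernel β α} [IsSFiniteKernel κ] (hκ : μ.map (fun ω => (Y ω, X ω)) = (μ.map Y) ⊗ₘ κ) :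
    μ.map (fun ω => ((Y ω, Z ω), (X ω, Z ω))) =
      (μ.map (fun ω => (Y ω, Z ω))) ⊗ₘ (κ ∥ₖ Kernel.id) := by
  have hYX_Z : IndepFun (fun ω => (Y ω, X ω)) Z μ := hindep.comp measurable_swap measurable_id
  have hY_Z : IndepFun Y Z μ := hindep.comp measurable_snd measurable_id
  rw [(indepFun_iff_map_prod_eq_prod_map_map hY.aemeasurable hZ.aemeasurable).1 hY_Z,
    Measure.compProd_parallelComp_id, ← hκ,
    ← (indepFun_iff_map_prod_eq_prod_map_map (by fun_prop) hZ.aemeasurable).1 hYX_Z,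
    Measure.map_map (by fun_prop) (by fun_prop)]
  rfl

end ProbabilityTheory

theorem stmt15_general
    {Ω : Type*} [MeasurableSpace Ω] (μ : Measure Ω) [IsProbabilityMeasure μ]
    {α β γ : Type*}
    [MeasurableSpace α] [PartialOrder α]
    [MeasurableSpace β] [PartialOrder β]
    [MeasurableSpace γ] [PartialOrder γ]
    (X : Ω → α) (Y : Ω → β) (Z : Ω → γ)
    (hX : Measurable X) (hY : Measurable Y) (hZ : Measurable Z)
    (hindep : IndepFun (fun ω => (X ω, Y ω)) Z μ)
    (κ : Kernel β α) [IsMarkovKernel κ]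
    (hκ : μ.map (fun ω => (Y ω, X ω)) = (μ.map Y) ⊗ₘ κ)
    (hκmono : ∀ g : α → ℝ, Measurable g → Monotone g → (∃ C, ∀ x, |g x| ≤ C) →
      Monotone (fun y => ∫ x, g x ∂(κ y))) :
    ∃ η : Kernel (β × γ) (α × γ), IsMarkovKernel η ∧
      μ.map (fun ω => ((Y ω, Z ω), (X ω, Z ω))) =
        (μ.map (fun ω => (Y ω, Z ω))) ⊗ₘ η ∧
      ∀ h : α × γ → ℝ, Measurable h → Monotone h → (∃ C, ∀ x, |h x| ≤ C) →
        Monotone (fun yz => ∫ x, h x ∂(η yz)) :=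
  ⟨κ ∥ₖ Kernel.id, inferInstance, hindep.map_prodMk_eq_compProd_parallelComp_id hX hY hZ hκ,
    Kernel.IsStochasticallyMonotone.parallelComp_id hκmono⟩

/-- Preservation of stochastic monotonicity under independent augmentation (second part):
if `X` is stochastically increasing in `Y` (expressed via a stochastically monotone
conditional-distribution kernel `κ` of `X` given `Y`) and `Z` is independent of `(X, Y)`,
then `(X, Z)` is stochastically increasing in the pair `(Y, Z)`: there is a version `η`
of the conditional distribution of `(X, Z)` given `(Y, Z)` with `(y, z) ↦ ∫ h dη(y, z)`
nondecreasing (product orders) for every bounded nondecreasing measurable `h`. -/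
theorem stmt15
    {Ω : Type*} [MeasurableSpace Ω] (μ : Measure Ω) [IsProbabilityMeasure μ]
    {α β γ : Type*}
    [MeasurableSpace α] [PartialOrder α] [StandardBorelSpace α]
    [MeasurableSpace β] [PartialOrder β] [StandardBorelSpace β]
    [MeasurableSpace γ] [PartialOrder γ] [StandardBorelSpace γ]
    (X : Ω → α) (Y : Ω → β) (Z : Ω → γ)
    (hX : Measurable X) (hY : Measurable Y) (hZ : Measurable Z)
    (hindep : IndepFun (fun ω => (X ω, Y ω)) Z μ)
    (κ : Kernel β α) [IsMarkovKernel κ]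
    (hκ : μ.map (fun ω => (Y ω, X ω)) = (μ.map Y) ⊗ₘ κ)
    (hκmono : ∀ g : α → ℝ, Measurable g → Monotone g → (∃ C, ∀ x, |g x| ≤ C) →
      Monotone (fun y => ∫ x, g x ∂(κ y))) :
    ∃ η : Kernel (β × γ) (α × γ), IsMarkovKernel η ∧
      μ.map (fun ω => ((Y ω, Z ω), (X ω, Z ω))) =
        (μ.map (fun ω => (Y ω, Z ω))) ⊗ₘ η ∧
      ∀ h : α × γ → ℝ, Measurable h → Monotone h → (∃ C, ∀ x, |h x| ≤ C) →
        Monotone (fun yz => ∫ x, h x ∂(η yz)) :=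
  stmt15_general μ X Y Z hX hY hZ hindep κ hκ hκmono
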